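/- arXiv:2203.04176 — 3 statements merged into one kernel-verified Lean document; each statement's English description precedes it below -/
import Mathlib

section
/- Let (Y, μ) be a measurable space with a σ-finite measure and let a, b : Y → [0,∞) be measurable and μ-integrable. For measurable d : Y → (0,1), define F(d) = ∫ a(y) log d(y) dμ(y) + ∫ b(y) log(1 − d(y)) dμ(y), valued in [−∞,∞). Let d*(y) = a(y)/(a(y)+b(y)) on the set {a + b > 0} (with d* defined arbitrarily in (0,1) elsewhere), and assume F(d*) > −∞. Then F(d) ≤ F(d*) for every measurable d : Y → (0,1), and F(d) = F(d*) if and only if d(y) = a(y)/(a(y)+b(y)) for almost every y with respect to the measure (a+b)·μ. In particular, the optimal classifier recovers the density ratio: d*/(1 − d*) = a/b wherever b > 0. (Binary classification recovers density ratios — the key step in the paper's proof of Lemma 2.) -/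
open MeasureTheory Real
open scoped ENNReal

/-- Extended-real-valued integral of a real function, defined as the difference between
the lower integral of the positive part and the lower integral of the negative part. -/
noncomputable def erealIntegral {α : Type*} [MeasurableSpace α] (μ : Measure α)
    (g : α → ℝ) : EReal :=
  ((∫⁻ z, ENNReal.ofReal (g z) ∂μ : ℝ≥0∞) : EReal) -
  ((∫⁻ z, ENNReal.ofReal (-(g z)) ∂μ : ℝ≥0∞) : EReal)

lemma erealIntegral_of_nonpos {α : Type*} [MeasurableSpace α] (μ : Measure α) {g : α → ℝ}
    (hg : ∀ x, g x ≤ 0) :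
    erealIntegral μ g = -((∫⁻ z, ENNReal.ofReal (-(g z)) ∂μ : ℝ≥0∞) : EReal) := by
  unfold erealIntegral
  have h0 : (∫⁻ z, ENNReal.ofReal (g z) ∂μ) = 0 := by
    have : ∀ z, ENNReal.ofReal (g z) = 0 := fun z => ENNReal.ofReal_eq_zero.2 (hg z)
    simp [this]
  rw [h0]
  simp [sub_eq_add_neg]

lemma gibbsAux (α β t : ℝ) (hα : 0 < α) (hβ : 0 < β) (ht0 : 0 < t) (ht1 : t < 1) :
    α * Real.log t + β * Real.log (1 - t) ≤
      α * Real.log (α/(α+β)) + β * Real.log (1 - α/(α+β)) ∧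
    (α * Real.log t + β * Real.log (1 - t) =
      α * Real.log (α/(α+β)) + β * Real.log (1 - α/(α+β)) → t = α/(α+β)) := by
  have hs : 0 < α + β := by linarith
  set p := α / (α + β) with hp
  have hp0 : 0 < p := div_pos hα hs
  have hp1 : p < 1 := (div_lt_one hs).2 (by linarith)
  have h1p : 1 - p = β / (α + β) := by rw [hp]; field_simp; ring
  have key : ∀ u : ℝ, 0 < u → u < 1 →
      α * Real.log u + β * Real.log (1 - u) - (α * Real.log p + β * Real.log (1 - p))
        = α * Real.log (u / p) + β * Real.log ((1 - u) / (1 - p)) := by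
    intro u hu0 hu1
    rw [Real.log_div hu0.ne' hp0.ne', Real.log_div (by linarith : (0:ℝ) < 1 - u).ne'
      (by linarith : (0:ℝ) < 1 - p).ne']
    ring
  have hb1 : α * Real.log (t / p) ≤ α * (t / p - 1) :=
    mul_le_mul_of_nonneg_left (Real.log_le_sub_one_of_pos (div_pos ht0 hp0)) hα.le
  have hb2 : β * Real.log ((1 - t) / (1 - p)) ≤ β * ((1 - t) / (1 - p) - 1) :=
    mul_le_mul_of_nonneg_left (Real.log_le_sub_one_of_pos
      (div_pos (by linarith) (by linarith))) hβ.le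
  have hsum : α * (t / p - 1) + β * ((1 - t) / (1 - p) - 1) = 0 := by
    rw [hp, h1p]
    field_simp
    ring
  constructor
  · have := key t ht0 ht1
    linarith
  · intro heq
    by_contra hne
    have hstrict : α * Real.log (t / p) < α * (t / p - 1) :=
      mul_lt_mul_of_pos_left (Real.log_lt_sub_one_of_pos (div_pos ht0 hp0)
        (by intro h; exact hne (by field_simp at h; linarith))) hα
    have := key t ht0 ht1
    linarith

/-- Binary classification recovers density ratios: the binary cross-entropy-type objective
`F(d) = ∫ a log d + ∫ b log (1 - d)` over classifiers `d : Y → (0,1)` is maximized exactly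
at `d* = a / (a + b)`, and the optimal classifier recovers the density ratio
`d*/(1-d*) = a/b` wherever `b > 0`. -/
theorem classification_recovers_density_ratio
    {Y : Type*} [MeasurableSpace Y] (μ : Measure Y) [SigmaFinite μ]
    (a b : Y → ℝ) (ha_meas : Measurable a) (hb_meas : Measurable b)
    (ha_nonneg : ∀ y, 0 ≤ a y) (hb_nonneg : ∀ y, 0 ≤ b y)
    (ha_int : Integrable a μ) (hb_int : Integrable b μ)
    -- the objective F(d) = ∫ a log d dμ + ∫ b log (1 - d) dμ, valued in [-∞, ∞)
    (F : (Y → ℝ) → EReal)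
    (hF : ∀ d, F d = erealIntegral μ (fun y => a y * Real.log (d y)) +
                     erealIntegral μ (fun y => b y * Real.log (1 - d y)))
    -- the optimal classifier d*(y) = a(y)/(a(y)+b(y)) on {a+b>0}, arbitrary in (0,1) elsewhere
    (dstar : Y → ℝ) (hdstar_meas : Measurable dstar)
    (hdstar_mem : ∀ y, dstar y ∈ Set.Ioo (0 : ℝ) 1)
    (hdstar_eq : ∀ y, 0 < a y + b y → dstar y = a y / (a y + b y))
    (hFstar : ⊥ < F dstar) :
    (∀ d : Y → ℝ, Measurable d → (∀ y, d y ∈ Set.Ioo (0 : ℝ) 1) →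
      F d ≤ F dstar ∧
        (F d = F dstar ↔
          d =ᵐ[μ.withDensity fun y => ENNReal.ofReal (a y + b y)]
            fun y => a y / (a y + b y))) ∧
    (∀ y, 0 < b y → dstar y / (1 - dstar y) = a y / b y) := by
    classical
  have hab_pos : ∀ y, 0 < a y + b y → 0 < a y ∧ 0 < b y := by
    intro y hy
    have h1 := (hdstar_mem y).1
    have h2 := (hdstar_mem y).2
    rw [hdstar_eq y hy] at h1 h2
    constructor
    · rcases div_pos_iff.mp h1 with ⟨h, _⟩ | ⟨_, h⟩
      · exact h
      · linarith
    · have := (div_lt_one hy).1 h2; linarith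
  have hratio : ∀ y, 0 < b y → dstar y / (1 - dstar y) = a y / b y := by
    intro y hby
    have hs : 0 < a y + b y := by linarith [ha_nonneg y]
    rw [hdstar_eq y hs]
    have h1 : (1 : ℝ) - a y / (a y + b y) = b y / (a y + b y) := by field_simp; ring
    rw [h1]
    rw [div_div_div_cancel_right₀]
    exact hs.ne'
  -- the nonnegative pointwise objective
  set ψ : (Y → ℝ) → Y → ℝ :=
    fun d y => -(a y * Real.log (d y)) + -(b y * Real.log (1 - d y)) with hψ
  have hψ_nonneg : ∀ (d : Y → ℝ), (∀ y, d y ∈ Set.Ioo (0:ℝ) 1) → ∀ y, 0 ≤ ψ d y := by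
    intro d hd y
    have h1 : Real.log (d y) ≤ 0 := Real.log_nonpos (hd y).1.le (hd y).2.le
    have h2 : Real.log (1 - d y) ≤ 0 :=
      Real.log_nonpos (by linarith [(hd y).2]) (by linarith [(hd y).1])
    have g1 := mul_nonpos_of_nonneg_of_nonpos (ha_nonneg y) h1
    have g2 := mul_nonpos_of_nonneg_of_nonpos (hb_nonneg y) h2
    simp only [hψ]
    linarith
  have hψ_meas : ∀ (d : Y → ℝ), Measurable d → Measurable (ψ d) := by
    intro d hdm
    simp only [hψ]
    exact ((ha_meas.mul (Real.measurable_log.comp hdm)).neg).add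
      ((hb_meas.mul (Real.measurable_log.comp (measurable_const.sub hdm))).neg)
  -- F in terms of ψ
  have hJ : ∀ (d : Y → ℝ), Measurable d → (∀ y, d y ∈ Set.Ioo (0:ℝ) 1) →
      F d = -((∫⁻ y, ENNReal.ofReal (ψ d y) ∂μ : ℝ≥0∞) : EReal) := by
    intro d hdm hdmem
    have hg1 : ∀ y, a y * Real.log (d y) ≤ 0 := fun y =>
      mul_nonpos_of_nonneg_of_nonpos (ha_nonneg y)
        (Real.log_nonpos (hdmem y).1.le (hdmem y).2.le)
    have hg2 : ∀ y, b y * Real.log (1 - d y) ≤ 0 := fun y =>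
      mul_nonpos_of_nonneg_of_nonpos (hb_nonneg y)
        (Real.log_nonpos (by linarith [(hdmem y).2]) (by linarith [(hdmem y).1]))
    have hI : (∫⁻ y, ENNReal.ofReal (-(a y * Real.log (d y))) ∂μ) +
        (∫⁻ y, ENNReal.ofReal (-(b y * Real.log (1 - d y))) ∂μ)
        = ∫⁻ y, ENNReal.ofReal (ψ d y) ∂μ := by
      have hm1 : Measurable fun y => ENNReal.ofReal (-(a y * Real.log (d y))) :=
        ((ha_meas.mul (Real.measurable_log.comp hdm)).neg).ennreal_ofReal
      rw [← lintegral_add_left hm1]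
      refine lintegral_congr fun y => ?_
      rw [← ENNReal.ofReal_add (by linarith [hg1 y]) (by linarith [hg2 y])]
    rw [hF d, erealIntegral_of_nonpos μ hg1, erealIntegral_of_nonpos μ hg2, ← hI,
      EReal.coe_ennreal_add, EReal.neg_add (Or.inl (by simp)) (Or.inr (by simp)),
      sub_eq_add_neg]
  -- finiteness of the optimal objective
  have hJstar_ne : (∫⁻ y, ENNReal.ofReal (ψ dstar y) ∂μ) ≠ ⊤ := by
    intro h
    rw [hJ dstar hdstar_meas hdstar_mem, h, EReal.coe_ennreal_top, EReal.neg_top] at hFstar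
    exact lt_irrefl _ hFstar
  -- pointwise comparison
  have hpoint : ∀ (d : Y → ℝ), (∀ y, d y ∈ Set.Ioo (0:ℝ) 1) → ∀ y,
      ψ dstar y ≤ ψ d y ∧
      (ψ d y = ψ dstar y → 0 < a y + b y → d y = a y / (a y + b y)) ∧
      (a y + b y ≤ 0 → ψ d y = ψ dstar y) := by
    intro d hd y
    by_cases hs : 0 < a y + b y
    · obtain ⟨haq, hbq⟩ := hab_pos y hs
      have hg := gibbsAux (a y) (b y) (d y) haq hbq (hd y).1 (hd y).2
      have hre : dstar y = a y / (a y + b y) := hdstar_eq y hs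
      simp only [hψ, hre]
      refine ⟨by linarith [hg.1], fun h _ => hg.2 (by linarith), fun h => absurd h (by linarith)⟩
    · have ha0 : a y = 0 := le_antisymm (by linarith [hb_nonneg y]) (ha_nonneg y)
      have hb0 : b y = 0 := le_antisymm (by linarith [ha_nonneg y]) (hb_nonneg y)
      simp only [hψ, ha0, hb0]
      exact ⟨by simp, fun _ hs' => by norm_num at hs', fun _ => by simp⟩
  refine ⟨?_, hratio⟩
  intro d hdm hdmem
  have hle : (∫⁻ y, ENNReal.ofReal (ψ dstar y) ∂μ) ≤ ∫⁻ y, ENNReal.ofReal (ψ d y) ∂μ :=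
    lintegral_mono fun y => ENNReal.ofReal_le_ofReal (hpoint d hdmem y).1
  constructor
  · rw [hJ d hdm hdmem, hJ dstar hdstar_meas hdstar_mem]
    exact EReal.neg_le_neg_iff.mpr (EReal.coe_ennreal_le_coe_ennreal_iff.2 hle)
  -- equality characterization
  have hFiff : F d = F dstar ↔
      (∫⁻ y, ENNReal.ofReal (ψ d y) ∂μ) = ∫⁻ y, ENNReal.ofReal (ψ dstar y) ∂μ := by
    rw [hJ d hdm hdmem, hJ dstar hdstar_meas hdstar_mem]
    constructor
    · intro h
      exact EReal.coe_ennreal_eq_coe_ennreal_iff.1 (neg_inj.1 h)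
    · intro h; rw [h]
  have hsplit : (∫⁻ y, ENNReal.ofReal (ψ d y) ∂μ)
      = (∫⁻ y, ENNReal.ofReal (ψ dstar y) ∂μ)
        + ∫⁻ y, ENNReal.ofReal (ψ d y - ψ dstar y) ∂μ := by
    rw [← lintegral_add_left ((hψ_meas dstar hdstar_meas).ennreal_ofReal)]
    refine lintegral_congr fun y => ?_
    rw [← ENNReal.ofReal_add (hψ_nonneg dstar hdstar_mem y)
      (sub_nonneg.2 (hpoint d hdmem y).1)]
    congr 1; ring
  have hzero_iff : (∫⁻ y, ENNReal.ofReal (ψ d y) ∂μ) = (∫⁻ y, ENNReal.ofReal (ψ dstar y) ∂μ)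
      ↔ (∫⁻ y, ENNReal.ofReal (ψ d y - ψ dstar y) ∂μ) = 0 := by
    rw [hsplit]
    constructor
    · intro h
      exact (ENNReal.add_right_inj hJstar_ne).1 (by rw [add_zero]; exact h)
    · intro h; rw [h, add_zero]
  have hdiff_meas : Measurable fun y => ENNReal.ofReal (ψ d y - ψ dstar y) :=
    ((hψ_meas d hdm).sub (hψ_meas dstar hdstar_meas)).ennreal_ofReal
  have haezero : (∫⁻ y, ENNReal.ofReal (ψ d y - ψ dstar y) ∂μ) = 0 ↔
      (fun y => ψ d y) =ᵐ[μ] fun y => ψ dstar y := by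
    rw [lintegral_eq_zero_iff hdiff_meas]
    constructor
    · intro h
      filter_upwards [h] with y hy
      have h1 : ψ d y - ψ dstar y ≤ 0 := by
        simpa [ENNReal.ofReal_eq_zero] using hy
      have h2 := (hpoint d hdmem y).1
      linarith
    · intro h
      filter_upwards [h] with y hy
      simp [hy]
  -- final translation to the withDensity measure
  have htarget_meas : Measurable fun y => a y / (a y + b y) :=
    ha_meas.div (ha_meas.add hb_meas)
  have hS_meas : MeasurableSet {y | ¬ d y = a y / (a y + b y)} :=
    (measurableSet_eq_fun hdm htarget_meas).compl
  have hw_meas : Measurable fun y => ENNReal.ofReal (a y + b y) :=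
    (ha_meas.add hb_meas).ennreal_ofReal
  have hν : (μ.withDensity fun y => ENNReal.ofReal (a y + b y))
      {y | ¬ d y = a y / (a y + b y)}
      = ∫⁻ y in {y | ¬ d y = a y / (a y + b y)}, ENNReal.ofReal (a y + b y) ∂μ :=
    withDensity_apply _ hS_meas
  have hae0 : (d =ᵐ[μ.withDensity fun y => ENNReal.ofReal (a y + b y)]
      fun y => a y / (a y + b y)) ↔
      (μ.withDensity fun y => ENNReal.ofReal (a y + b y))
        {y | ¬ d y = a y / (a y + b y)} = 0 := ae_iff
  rw [hFiff, hzero_iff, haezero, hae0, hν, setLIntegral_eq_zero_iff hS_meas hw_meas]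
  constructor
  · intro h
    filter_upwards [h] with y hy
    intro hyS
    by_contra hw
    have hs : 0 < a y + b y := by
      by_contra hs'
      exact hw (ENNReal.ofReal_eq_zero.2 (by linarith [not_lt.1 hs']))
    exact hyS ((hpoint d hdmem y).2.1 hy hs)
  · intro h
    filter_upwards [h] with y hy
    by_cases hds : d y = a y / (a y + b y)
    · by_cases hs : 0 < a y + b y
      · have : d y = dstar y := by rw [hds, hdstar_eq y hs]
        simp only [hψ, this]
      · exact (hpoint d hdmem y).2.2 (not_lt.1 hs)
    · have hw0 := hy hds
      have hs' : a y + b y ≤ 0 := by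
        simpa [ENNReal.ofReal_eq_zero] using hw0
      exact (hpoint d hdmem y).2.2 hs'
end

section
/- Let p : 𝒳 → [0,∞) be a measurable probability density with respect to μ𝒳 (the contrast marginal). For measurable d : Θ × 𝒳 → (0,1), define the kernel-weighted classification objective L(d) = ∬ p̃(θ) f(θ,x) K(x) log d(θ,x) d(μΘ ⊗ μ𝒳) + ∬ p̃(θ) p(x) K(x) log(1 − d(θ,x)) d(μΘ ⊗ μ𝒳), valued in [−∞,∞). Let d*(θ,x) = f(θ,x)/(f(θ,x) + p(x)) on the set {f(θ,x) + p(x) > 0} (arbitrary in (0,1) elsewhere), and assume L(d*) > −∞. Then L(d) ≤ L(d*) for all admissible d, with equality if and only if d = d* almost everywhere with respect to the measure p̃(θ) K(x) (f(θ,x) + p(x)) d(μΘ ⊗ μ𝒳); consequently the optimal classifier satisfies d*(θ,x)/(1 − d*(θ,x)) = f(θ,x)/p(x) for almost every (θ,x) with p̃(θ)K(x)p(x) > 0. (The optimum of the kernel-weighted SNRE classification loss of the paper's Lemma 2.) -/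
open MeasureTheory Real
open scoped ENNReal

/-- Key pointwise inequality: for `a,b > 0` the function
`t ↦ a log t + b log (1-t)` on `(0,1)` is maximized exactly at `t = a/(a+b)`. -/
lemma key_log_ineq {a b t : ℝ} (ha : 0 < a) (hb : 0 < b) (ht0 : 0 < t) (ht1 : t < 1) :
    a * Real.log t + b * Real.log (1 - t) ≤
      a * Real.log (a / (a + b)) + b * Real.log (1 - a / (a + b)) ∧
    (a * Real.log t + b * Real.log (1 - t) =
      a * Real.log (a / (a + b)) + b * Real.log (1 - a / (a + b)) → t = a / (a + b)) := by
  have hab : 0 < a + b := by linarith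
  set s := a / (a + b) with hs
  have hs0 : 0 < s := div_pos ha hab
  have hs1 : s < 1 := (div_lt_one hab).mpr (by linarith)
  have h1s : 1 - s = b / (a + b) := by rw [hs]; field_simp; ring
  have hzero : a * (t / s - 1) + b * ((1 - t) / (1 - s) - 1) = 0 := by
    rw [h1s, hs]; field_simp; ring
  have hsp1 : Real.log (t / s) = Real.log t - Real.log s := Real.log_div ht0.ne' hs0.ne'
  have hsp2 : Real.log ((1 - t) / (1 - s)) = Real.log (1 - t) - Real.log (1 - s) :=
    Real.log_div (by linarith) (by linarith)
  have hlog1 : Real.log t - Real.log s ≤ t / s - 1 := by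
    rw [← hsp1]; exact Real.log_le_sub_one_of_pos (div_pos ht0 hs0)
  have hlog2 : Real.log (1 - t) - Real.log (1 - s) ≤ (1 - t) / (1 - s) - 1 := by
    rw [← hsp2]; exact Real.log_le_sub_one_of_pos (div_pos (by linarith) (by linarith))
  have e1 : a * Real.log t - a * Real.log s ≤ a * (t / s - 1) := by
    rw [← mul_sub]; exact mul_le_mul_of_nonneg_left hlog1 ha.le
  have e2 : b * Real.log (1 - t) - b * Real.log (1 - s) ≤ b * ((1 - t) / (1 - s) - 1) := by
    rw [← mul_sub]; exact mul_le_mul_of_nonneg_left hlog2 hb.le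
  refine ⟨by linarith, ?_⟩
  intro heq
  by_contra hne
  have hts : t / s ≠ 1 := by
    intro h
    exact hne (by field_simp at h; linarith)
  have hlog1' : Real.log t - Real.log s < t / s - 1 := by
    rw [← hsp1]; exact Real.log_lt_sub_one_of_pos (div_pos ht0 hs0) hts
  have e1' : a * Real.log t - a * Real.log s < a * (t / s - 1) := by
    rw [← mul_sub]; exact mul_lt_mul_of_pos_left hlog1' ha
  linarith

/-- Auxiliary nonnegative integrand: the negation of the pointwise classification objective. -/
noncomputable def Gcore {Θ 𝒳 : Type*} (ptil : Θ → ℝ) (f : Θ × 𝒳 → ℝ) (K : 𝒳 → ℝ)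
    (p : 𝒳 → ℝ) (d : Θ × 𝒳 → ℝ) (z : Θ × 𝒳) : ℝ≥0∞ :=
  ENNReal.ofReal (-(ptil z.1 * f z * K z.2 * Real.log (d z) +
    ptil z.1 * p z.2 * K z.2 * Real.log (1 - d z)))

/-- The optimum of the kernel-weighted SNRE classification loss (paper's Lemma 2):
the objective is maximized exactly at `d*(θ,x) = f(θ,x)/(f(θ,x)+p(x))`, and the optimal
classifier satisfies `d*/(1-d*) = f/p` almost everywhere where `p̃ K p > 0`. -/
theorem snre_kernel_weighted_classifier
    {Θ 𝒳 : Type*} [MeasurableSpace Θ] [MeasurableSpace 𝒳]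
    (μΘ : Measure Θ) (μX : Measure 𝒳) [SigmaFinite μΘ] [SigmaFinite μX]
    -- proposal density p̃
    (ptil : Θ → ℝ) (hptil_meas : Measurable ptil) (hptil_nonneg : ∀ θ, 0 ≤ ptil θ)
    (hptil_int : Integrable ptil μΘ) (hptil_prob : ∫ θ, ptil θ ∂μΘ = 1)
    -- likelihood family f(θ,x) = p(x|θ)
    (f : Θ × 𝒳 → ℝ) (hf_meas : Measurable f) (hf_nonneg : ∀ z, 0 ≤ f z)
    (hf_prob : ∀ θ, ∫ x, f (θ, x) ∂μX = 1)
    -- calibration kernel weight K(x) = K(x, x₀)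
    (K : 𝒳 → ℝ) (hK_meas : Measurable K) (hK_nonneg : ∀ x, 0 ≤ K x)
    -- contrast marginal density p
    (p : 𝒳 → ℝ) (hp_meas : Measurable p) (hp_nonneg : ∀ x, 0 ≤ p x)
    (hp_prob : ∫ x, p x ∂μX = 1)
    -- the kernel-weighted classification objective, valued in [-∞, ∞)
    (L : (Θ × 𝒳 → ℝ) → EReal)
    (hL : ∀ d, L d =
      erealIntegral (μΘ.prod μX)
        (fun z => ptil z.1 * f z * K z.2 * Real.log (d z)) +
      erealIntegral (μΘ.prod μX)
        (fun z => ptil z.1 * p z.2 * K z.2 * Real.log (1 - d z)))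
    -- optimal classifier d*(θ,x) = f(θ,x)/(f(θ,x)+p(x)) on {f+p>0}, arbitrary in (0,1) elsewhere
    (dstar : Θ × 𝒳 → ℝ) (hdstar_meas : Measurable dstar)
    (hdstar_mem : ∀ z, dstar z ∈ Set.Ioo (0 : ℝ) 1)
    (hdstar_eq : ∀ z : Θ × 𝒳, 0 < f z + p z.2 → dstar z = f z / (f z + p z.2))
    (hLstar : ⊥ < L dstar) :
    (∀ d : Θ × 𝒳 → ℝ, Measurable d → (∀ z, d z ∈ Set.Ioo (0 : ℝ) 1) →
      L d ≤ L dstar ∧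
        (L d = L dstar ↔
          d =ᵐ[(μΘ.prod μX).withDensity
              fun z => ENNReal.ofReal (ptil z.1 * K z.2 * (f z + p z.2))]
            fun z => f z / (f z + p z.2))) ∧
    ((fun z => dstar z / (1 - dstar z))
      =ᵐ[(μΘ.prod μX).withDensity
          fun z => ENNReal.ofReal (ptil z.1 * K z.2 * p z.2)]
        fun z => f z / p z.2) := by
  -- wherever f + p > 0, both f and p are positive (else dstar could not lie in (0,1))
  have hfp_pos : ∀ z : Θ × 𝒳, 0 < f z + p z.2 → 0 < f z ∧ 0 < p z.2 := by
    intro z hz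
    have hd := hdstar_mem z
    have he := hdstar_eq z hz
    have hf' : f z = dstar z * (f z + p z.2) := by rw [he]; field_simp
    refine ⟨hf' ▸ mul_pos hd.1 hz, ?_⟩
    have h2 : f z / (f z + p z.2) < 1 := he ▸ hd.2
    have := (div_lt_one hz).mp h2
    linarith
  -- measurability helpers
  have hm1 : ∀ d : Θ × 𝒳 → ℝ, Measurable d →
      Measurable (fun z : Θ × 𝒳 => ptil z.1 * f z * K z.2 * Real.log (d z)) := by
    intro d hd
    exact (((hptil_meas.comp measurable_fst).mul hf_meas).mul
      (hK_meas.comp measurable_snd)).mul (Real.measurable_log.comp hd)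
  have hm2 : ∀ d : Θ × 𝒳 → ℝ, Measurable d →
      Measurable (fun z : Θ × 𝒳 => ptil z.1 * p z.2 * K z.2 * Real.log (1 - d z)) := by
    intro d hd
    exact (((hptil_meas.comp measurable_fst).mul (hp_meas.comp measurable_snd)).mul
      (hK_meas.comp measurable_snd)).mul (Real.measurable_log.comp (measurable_const.sub hd))
  have hGmeas : ∀ d : Θ × 𝒳 → ℝ, Measurable d → Measurable (Gcore ptil f K p d) := by
    intro d hd
    exact ENNReal.measurable_ofReal.comp ((hm1 d hd).add (hm2 d hd)).neg
  have hdens_meas : Measurable (fun z : Θ × 𝒳 =>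
      ENNReal.ofReal (ptil z.1 * K z.2 * (f z + p z.2))) :=
    ENNReal.measurable_ofReal.comp (((hptil_meas.comp measurable_fst).mul
      (hK_meas.comp measurable_snd)).mul (hf_meas.add (hp_meas.comp measurable_snd)))
  have hdens2_meas : Measurable (fun z : Θ × 𝒳 =>
      ENNReal.ofReal (ptil z.1 * K z.2 * p z.2)) :=
    ENNReal.measurable_ofReal.comp (((hptil_meas.comp measurable_fst).mul
      (hK_meas.comp measurable_snd)).mul (hp_meas.comp measurable_snd))
  -- both integrands are nonpositive
  have hnonpos : ∀ (d : Θ × 𝒳 → ℝ), (∀ z, d z ∈ Set.Ioo (0:ℝ) 1) → ∀ z : Θ × 𝒳,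
      ptil z.1 * f z * K z.2 * Real.log (d z) ≤ 0 ∧
      ptil z.1 * p z.2 * K z.2 * Real.log (1 - d z) ≤ 0 := by
    intro d hd z
    obtain ⟨h0, h1⟩ := hd z
    constructor
    · exact mul_nonpos_iff.mpr (Or.inl ⟨mul_nonneg (mul_nonneg (hptil_nonneg _)
        (hf_nonneg _)) (hK_nonneg _), Real.log_nonpos h0.le h1.le⟩)
    · exact mul_nonpos_iff.mpr (Or.inl ⟨mul_nonneg (mul_nonneg (hptil_nonneg _)
        (hp_nonneg _)) (hK_nonneg _), Real.log_nonpos (by linarith) (by linarith)⟩)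
  -- where the density vanishes, Gcore vanishes
  have hGzero : ∀ (d : Θ × 𝒳 → ℝ) (z : Θ × 𝒳),
      ¬ 0 < ptil z.1 * K z.2 * (f z + p z.2) → Gcore ptil f K p d z = 0 := by
    intro d z hc
    push_neg at hc
    have ha' : 0 ≤ ptil z.1 * f z * K z.2 :=
      mul_nonneg (mul_nonneg (hptil_nonneg _) (hf_nonneg _)) (hK_nonneg _)
    have hb' : 0 ≤ ptil z.1 * p z.2 * K z.2 :=
      mul_nonneg (mul_nonneg (hptil_nonneg _) (hp_nonneg _)) (hK_nonneg _)
    have hsum : ptil z.1 * f z * K z.2 + ptil z.1 * p z.2 * K z.2 ≤ 0 := by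
      have : ptil z.1 * f z * K z.2 + ptil z.1 * p z.2 * K z.2 =
        ptil z.1 * K z.2 * (f z + p z.2) := by ring
      linarith
    have ha0 : ptil z.1 * f z * K z.2 = 0 := le_antisymm (by linarith) ha'
    have hb0 : ptil z.1 * p z.2 * K z.2 = 0 := le_antisymm (by linarith) hb'
    unfold Gcore
    rw [ha0, hb0]
    simp
  -- the objective in terms of Gcore
  have hLform : ∀ d : Θ × 𝒳 → ℝ, Measurable d → (∀ z, d z ∈ Set.Ioo (0:ℝ) 1) →
      L d = -(((∫⁻ z, Gcore ptil f K p d z ∂(μΘ.prod μX)) : ℝ≥0∞) : EReal) := by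
    intro d hdm hdmem
    rw [hL d]
    unfold erealIntegral
    have hz1 : (∫⁻ z, ENNReal.ofReal (ptil z.1 * f z * K z.2 * Real.log (d z))
        ∂(μΘ.prod μX)) = 0 := by
      rw [lintegral_congr (g := fun _ => (0:ℝ≥0∞))
        (fun z => ENNReal.ofReal_eq_zero.mpr (hnonpos d hdmem z).1), lintegral_zero]
    have hz2 : (∫⁻ z, ENNReal.ofReal (ptil z.1 * p z.2 * K z.2 * Real.log (1 - d z))
        ∂(μΘ.prod μX)) = 0 := by
      rw [lintegral_congr (g := fun _ => (0:ℝ≥0∞))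
        (fun z => ENNReal.ofReal_eq_zero.mpr (hnonpos d hdmem z).2), lintegral_zero]
    have hAB : (∫⁻ z, Gcore ptil f K p d z ∂(μΘ.prod μX)) =
        (∫⁻ z, ENNReal.ofReal (-(ptil z.1 * f z * K z.2 * Real.log (d z)))
          ∂(μΘ.prod μX)) +
        (∫⁻ z, ENNReal.ofReal (-(ptil z.1 * p z.2 * K z.2 * Real.log (1 - d z)))
          ∂(μΘ.prod μX)) := by
      rw [← lintegral_add_left (f := fun z => ENNReal.ofReal (-(ptil z.1 * f z * K z.2 * Real.log (d z)))) ((hm1 d hdm).neg.ennreal_ofReal)]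
      apply lintegral_congr
      intro z
      unfold Gcore
      rw [neg_add, ENNReal.ofReal_add (neg_nonneg.2 (hnonpos d hdmem z).1)
        (neg_nonneg.2 (hnonpos d hdmem z).2)]
    rw [hz1, hz2, hAB, EReal.coe_ennreal_add, EReal.coe_ennreal_zero, zero_sub, zero_sub,
      EReal.neg_add (Or.inl (EReal.coe_ennreal_ne_bot _)) (Or.inr (EReal.coe_ennreal_ne_bot _)),
      sub_eq_add_neg]
  -- pointwise optimality of dstar
  have hpt : ∀ (d : Θ × 𝒳 → ℝ), (∀ z, d z ∈ Set.Ioo (0:ℝ) 1) → ∀ z : Θ × 𝒳,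
      Gcore ptil f K p dstar z ≤ Gcore ptil f K p d z ∧
      (0 < ptil z.1 * K z.2 * (f z + p z.2) →
        Gcore ptil f K p d z = Gcore ptil f K p dstar z → d z = f z / (f z + p z.2)) := by
    intro d hdmem z
    by_cases hc : 0 < ptil z.1 * K z.2 * (f z + p z.2)
    · have hck : 0 < ptil z.1 * K z.2 := by
        rcases (mul_nonneg (hptil_nonneg z.1) (hK_nonneg z.2)).lt_or_eq with h | h
        · exact h
        · exfalso; rw [← h, zero_mul] at hc; exact lt_irrefl 0 hc
      have hfp : 0 < f z + p z.2 := by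
        rcases (add_nonneg (hf_nonneg z) (hp_nonneg z.2)).lt_or_eq with h | h
        · exact h
        · exfalso; rw [← h, mul_zero] at hc; exact lt_irrefl 0 hc
      obtain ⟨hfz, hpz⟩ := hfp_pos z hfp
      have ha : 0 < ptil z.1 * f z * K z.2 := by
        rw [show ptil z.1 * f z * K z.2 = ptil z.1 * K z.2 * f z from by ring]
        exact mul_pos hck hfz
      have hb : 0 < ptil z.1 * p z.2 * K z.2 := by
        rw [show ptil z.1 * p z.2 * K z.2 = ptil z.1 * K z.2 * p z.2 from by ring]
        exact mul_pos hck hpz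
      have hds := hdstar_eq z hfp
      have habs : ptil z.1 * f z * K z.2 /
          (ptil z.1 * f z * K z.2 + ptil z.1 * p z.2 * K z.2) = f z / (f z + p z.2) := by
        rw [show ptil z.1 * f z * K z.2 = ptil z.1 * K z.2 * f z from by ring,
          show ptil z.1 * K z.2 * f z + ptil z.1 * p z.2 * K z.2 =
            ptil z.1 * K z.2 * (f z + p z.2) from by ring,
          mul_div_mul_left _ _ hck.ne']
      have hkey := key_log_ineq ha hb (hdmem z).1 (hdmem z).2
      rw [habs] at hkey
      constructor
      · unfold Gcore
        apply ENNReal.ofReal_le_ofReal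
        rw [hds]
        linarith [hkey.1]
      · intro _ hGeq
        unfold Gcore at hGeq
        have hd1 := (hnonpos d hdmem z).1
        have hd2 := (hnonpos d hdmem z).2
        have hs1 := (hnonpos dstar hdstar_mem z).1
        have hs2 := (hnonpos dstar hdstar_mem z).2
        have hre := (ENNReal.ofReal_eq_ofReal_iff (by linarith) (by linarith)).mp hGeq
        have hre' : ptil z.1 * f z * K z.2 * Real.log (d z) +
            ptil z.1 * p z.2 * K z.2 * Real.log (1 - d z) =
            ptil z.1 * f z * K z.2 * Real.log (f z / (f z + p z.2)) +
            ptil z.1 * p z.2 * K z.2 * Real.log (1 - f z / (f z + p z.2)) := by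
          have := neg_injective hre
          rw [hds] at this
          linarith [this]
        exact hkey.2 hre'
    · constructor
      · rw [hGzero d z hc, hGzero dstar z hc]
      · intro h0 _
        exact absurd h0 hc
  refine ⟨?_, ?_⟩
  · intro d hdm hdmem
    have hLd := hLform d hdm hdmem
    have hLs := hLform dstar hdstar_meas hdstar_mem
    have hle : (∫⁻ z, Gcore ptil f K p dstar z ∂(μΘ.prod μX)) ≤
        (∫⁻ z, Gcore ptil f K p d z ∂(μΘ.prod μX)) :=
      lintegral_mono fun z => (hpt d hdmem z).1
    have hfin : (∫⁻ z, Gcore ptil f K p dstar z ∂(μΘ.prod μX)) ≠ ⊤ := by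
      intro h
      rw [hLs, h] at hLstar
      simp at hLstar
    refine ⟨?_, ?_, ?_⟩
    · rw [hLd, hLs, EReal.neg_le_neg_iff]
      exact EReal.coe_ennreal_le_coe_ennreal_iff.mpr hle
    · intro heq
      rw [hLd, hLs] at heq
      have hII : (∫⁻ z, Gcore ptil f K p d z ∂(μΘ.prod μX)) =
          (∫⁻ z, Gcore ptil f K p dstar z ∂(μΘ.prod μX)) :=
        EReal.coe_ennreal_eq_coe_ennreal_iff.mp (neg_injective heq)
      have hsub0 : ∫⁻ z, (Gcore ptil f K p d z - Gcore ptil f K p dstar z)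
          ∂(μΘ.prod μX) = 0 := by
        rw [lintegral_sub (hGmeas dstar hdstar_meas) hfin (ae_of_all _ fun z => (hpt d hdmem z).1),
          hII, tsub_self]
      have hae0 := (lintegral_eq_zero_iff ((hGmeas d hdm).sub (hGmeas dstar hdstar_meas))).mp hsub0
      rw [Filter.EventuallyEq, ae_withDensity_iff hdens_meas]
      filter_upwards [hae0] with z hz hdz
      have hpos : 0 < ptil z.1 * K z.2 * (f z + p z.2) := by
        by_contra h
        push_neg at h
        exact hdz (ENNReal.ofReal_eq_zero.mpr h)
      have hGeq : Gcore ptil f K p d z = Gcore ptil f K p dstar z := by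
        have hz' : Gcore ptil f K p d z - Gcore ptil f K p dstar z = 0 := hz
        exact le_antisymm (tsub_eq_zero_iff_le.mp hz') (hpt d hdmem z).1
      exact (hpt d hdmem z).2 hpos hGeq
    · intro hae
      rw [hLd, hLs]
      have hII : (∫⁻ z, Gcore ptil f K p d z ∂(μΘ.prod μX)) =
          (∫⁻ z, Gcore ptil f K p dstar z ∂(μΘ.prod μX)) := by
        apply lintegral_congr_ae
        rw [Filter.EventuallyEq, ae_withDensity_iff hdens_meas] at hae
        filter_upwards [hae] with z hz
        by_cases hpos : 0 < ptil z.1 * K z.2 * (f z + p z.2)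
        · have hd := hz (ENNReal.ofReal_pos.mpr hpos).ne'
          have hfp : 0 < f z + p z.2 := by
            rcases (add_nonneg (hf_nonneg z) (hp_nonneg z.2)).lt_or_eq with h | h
            · exact h
            · exfalso; rw [← h, mul_zero] at hpos; exact lt_irrefl 0 hpos
          have hdd : d z = dstar z := by rw [hd, hdstar_eq z hfp]
          unfold Gcore
          rw [hdd]
        · rw [hGzero d z hpos, hGzero dstar z hpos]
      rw [hII]
  · rw [Filter.EventuallyEq, ae_withDensity_iff hdens2_meas]
    apply ae_of_all
    intro z hz
    have hpos : 0 < ptil z.1 * K z.2 * p z.2 := by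
      by_contra h
      push_neg at h
      exact hz (ENNReal.ofReal_eq_zero.mpr h)
    have hpz : 0 < p z.2 := by
      rcases (hp_nonneg z.2).lt_or_eq with h | h
      · exact h
      · exfalso; rw [← h, mul_zero] at hpos; exact lt_irrefl 0 hpos
    have hfp : 0 < f z + p z.2 := by linarith [hf_nonneg z]
    have hds := hdstar_eq z hfp
    have h1 : f z + p z.2 ≠ 0 := hfp.ne'
    have h2 : p z.2 ≠ 0 := hpz.ne'
    rw [hds, show (1 : ℝ) - f z / (f z + p z.2) = p z.2 / (f z + p z.2) from by field_simp; ring]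
    field_simp
end

section
/- Let μ be a σ-finite measure on a measurable space Θ, let p̄ : Θ → [0,∞) be measurable with Z = ∫ p̄ dμ ∈ (0,∞), and let q be a measurable probability density with respect to μ with q > 0 μ-a.e. on {p̄ > 0} and p̄ > 0 q·μ-a.e. Write X(θ) = p̄(θ)/q(θ) and suppose ∫ q |log X| dμ < ∞. For α ∈ (0,1), define the Rényi variational bound ℒ_α = (1/(1−α)) log ∫ q(θ) X(θ)^{1−α} dμ(θ), assuming 0 < ∫ q X^{1−α} dμ < ∞. Then the ELBO, the Rényi bound, and the log-evidence are ordered: ∫ q(θ) log X(θ) dμ(θ) ≤ ℒ_α ≤ log Z. (The Rényi α-divergence variational bound used as an objective in the paper, sandwiched between the ELBO and the log-evidence for α ∈ (0,1).) -/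
open MeasureTheory Real
open scoped ENNReal

/-- Tangent-line bound for the concave function `t ↦ t ^ p` on `[0, ∞)`, `p ∈ (0,1)`:
`t ^ p ≤ Z ^ p + p * Z ^ (p - 1) * (t - Z)`. -/
lemma rpow_le_tangent {t Z p : ℝ} (ht : 0 ≤ t) (hZ : 0 < Z) (hp0 : 0 ≤ p) (hp1 : p ≤ 1) :
    t ^ p ≤ Z ^ p + p * Z ^ (p - 1) * (t - Z) := by
  have hs : (-1 : ℝ) ≤ t / Z - 1 := by
    have : 0 ≤ t / Z := div_nonneg ht hZ.le
    linarith
  have hbern := rpow_one_add_le_one_add_mul_self hs hp0 hp1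
  have h1 : (1:ℝ) + (t / Z - 1) = t / Z := by ring
  rw [h1] at hbern
  have hdiv : (t / Z) ^ p = t ^ p / Z ^ p := Real.div_rpow ht hZ.le p
  rw [hdiv] at hbern
  have hZp : (0:ℝ) < Z ^ p := Real.rpow_pos_of_pos hZ p
  have hmul := mul_le_mul_of_nonneg_left hbern hZp.le
  rw [mul_div_cancel₀ _ (ne_of_gt hZp)] at hmul
  have hZp1 : Z ^ (p - 1) = Z ^ p / Z := by
    rw [Real.rpow_sub hZ, Real.rpow_one]
  rw [hZp1]
  calc t ^ p ≤ Z ^ p * (1 + p * (t / Z - 1)) := hmul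
    _ = Z ^ p + p * (Z ^ p / Z) * (t - Z) := by
        field_simp

/-- The Rényi α-divergence variational bound (for α ∈ (0,1)) is sandwiched between the
ELBO and the log-evidence: `∫ q log(p̄/q) dμ ≤ ℒ_α ≤ log Z`, where
`ℒ_α = (1/(1−α)) log ∫ q (p̄/q)^{1−α} dμ` and `Z = ∫ p̄ dμ`. -/
theorem renyi_bound_sandwich
    {Θ : Type*} [MeasurableSpace Θ] (μ : Measure Θ) [SigmaFinite μ]
    -- unnormalized posterior p̄ with evidence Z = ∫ p̄ dμ ∈ (0, ∞)
    (pbar : Θ → ℝ) (hpbar_meas : Measurable pbar) (hpbar_nonneg : ∀ θ, 0 ≤ pbar θ)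
    (hpbar_int : Integrable pbar μ)
    (Z : ℝ) (hZ : Z = ∫ θ, pbar θ ∂μ) (hZpos : 0 < Z)
    -- probability density q, with q > 0 μ-a.e. on {p̄ > 0} and p̄ > 0 q·μ-a.e.
    (q : Θ → ℝ) (hq_meas : Measurable q) (hq_nonneg : ∀ θ, 0 ≤ q θ)
    (hq_prob : ∫ θ, q θ ∂μ = 1)
    (hq_pos : ∀ᵐ θ ∂μ, 0 < pbar θ → 0 < q θ)
    (hpbar_pos : ∀ᵐ θ ∂(μ.withDensity fun θ => ENNReal.ofReal (q θ)), 0 < pbar θ)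
    -- the density ratio X = p̄/q, with ∫ q |log X| dμ < ∞
    (X : Θ → ℝ) (hX : ∀ θ, X θ = pbar θ / q θ)
    (hlog_int : Integrable (fun θ => q θ * |Real.log (X θ)|) μ)
    -- α ∈ (0,1) and the Rényi variational bound ℒ_α, assuming 0 < ∫ q X^{1−α} dμ < ∞
    (α : ℝ) (hα : α ∈ Set.Ioo (0 : ℝ) 1)
    (I : ℝ) (hI : I = ∫ θ, q θ * X θ ^ (1 - α) ∂μ)
    (hI_int : Integrable (fun θ => q θ * X θ ^ (1 - α)) μ)
    (hI_pos : 0 < I)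
    (Lα : ℝ) (hLα : Lα = (1 / (1 - α)) * Real.log I) :
    (∫ θ, q θ * Real.log (X θ) ∂μ) ≤ Lα ∧ Lα ≤ Real.log Z := by
  set p : ℝ := 1 - α with hp_def
  have hp0 : 0 < p := by simp only [hp_def]; linarith [hα.2]
  have hp1 : p < 1 := by simp only [hp_def]; linarith [hα.1]
  -- X is nonnegative and measurable
  have hX_nonneg : ∀ θ, 0 ≤ X θ := fun θ => by
    rw [hX]; exact div_nonneg (hpbar_nonneg θ) (hq_nonneg θ)
  have hX_meas : Measurable X := by
    have : X = fun θ => pbar θ / q θ := funext hX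
    rw [this]; exact hpbar_meas.div hq_meas
  -- from hpbar_pos : a.e. μ, q > 0 → pbar > 0
  have hA : ∀ᵐ θ ∂μ, 0 < q θ → 0 < pbar θ := by
    rw [ae_withDensity_iff (hq_meas.ennreal_ofReal)] at hpbar_pos
    filter_upwards [hpbar_pos] with θ h hq
    exact h (by simpa [ENNReal.ofReal_eq_zero, not_le] using hq)
  -- q is integrable
  have hq_int : Integrable q μ := by
    by_contra h
    rw [integral_undef h] at hq_prob
    norm_num at hq_prob
  -- q * X = pbar a.e.
  have hqX : (fun θ => q θ * X θ) =ᵐ[μ] pbar := by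
    filter_upwards [hq_pos] with θ h
    rcases lt_or_eq_of_le (hq_nonneg θ) with hq' | hq'
    · rw [hX]; field_simp
    · have hp' : pbar θ = 0 := by
        by_contra hc
        have := h (lt_of_le_of_ne (hpbar_nonneg θ) (Ne.symm hc))
        rw [← hq'] at this; exact lt_irrefl _ this
      simp [← hq', hp']
  have hqX_int : Integrable (fun θ => q θ * X θ) μ := hpbar_int.congr hqX.symm
  have hqX_integral : ∫ θ, q θ * X θ ∂μ = Z := by
    rw [hZ]; exact integral_congr_ae hqX
  -- Part 2: I ≤ Z ^ p, via tangent line of t ↦ t^p at Z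
  have hI_le : I ≤ Z ^ p := by
    have hmono : ∫ θ, q θ * X θ ^ p ∂μ ≤
        ∫ θ, q θ * (Z ^ p + p * Z ^ (p - 1) * (X θ - Z)) ∂μ := by
      apply integral_mono_ae hI_int
      · have heq : (fun θ => q θ * (Z ^ p + p * Z ^ (p - 1) * (X θ - Z))) =
            fun θ => q θ * (Z ^ p - p * Z ^ (p-1) * Z) + p * Z ^ (p-1) * (q θ * X θ) := by
          funext θ; ring
        rw [heq]
        exact (hq_int.mul_const _).add (hqX_int.const_mul _)
      · filter_upwards with θ
        exact mul_le_mul_of_nonneg_left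
          (rpow_le_tangent (hX_nonneg θ) hZpos hp0.le hp1.le) (hq_nonneg θ)
    have hrhs : ∫ θ, q θ * (Z ^ p + p * Z ^ (p - 1) * (X θ - Z)) ∂μ = Z ^ p := by
      have heq : (fun θ => q θ * (Z ^ p + p * Z ^ (p - 1) * (X θ - Z))) =
          fun θ => q θ * (Z ^ p - p * Z ^ (p-1) * Z) + p * Z ^ (p-1) * (q θ * X θ) := by
        funext θ; ring
      rw [heq, integral_add (hq_int.mul_const _) (hqX_int.const_mul _),
        integral_mul_const, integral_const_mul, hq_prob, hqX_integral]
      have hZZ : Z ^ (p - 1) * Z = Z ^ p := by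
        rw [Real.rpow_sub hZpos, Real.rpow_one, div_mul_cancel₀ _ (ne_of_gt hZpos)]
      nlinarith [hZZ]
    calc I = ∫ θ, q θ * X θ ^ p ∂μ := hI
      _ ≤ _ := hmono
      _ = Z ^ p := hrhs
  have h2 : Lα ≤ Real.log Z := by
    have hlogI : Real.log I ≤ p * Real.log Z := by
      calc Real.log I ≤ Real.log (Z ^ p) := Real.log_le_log hI_pos hI_le
        _ = p * Real.log Z := Real.log_rpow hZpos p
    rw [hLα]
    rw [div_mul_eq_mul_div, one_mul, div_le_iff₀ hp0]
    linarith [hlogI]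
  -- Part 1: ELBO ≤ Lα, via log y ≤ y/I - 1 + log I
  have hqlog_int : Integrable (fun θ => q θ * Real.log (X θ)) μ := by
    apply hlog_int.mono' ((hq_meas.mul (hX_meas.log)).aestronglyMeasurable)
    filter_upwards with θ
    rw [Real.norm_eq_abs, Pi.mul_apply, abs_mul, abs_of_nonneg (hq_nonneg θ)]
  have h1 : (∫ θ, q θ * Real.log (X θ) ∂μ) ≤ Lα := by
    -- pointwise: p * q * log X ≤ q * (X^p / I - 1 + log I)  a.e.
    have hptwise : ∀ᵐ θ ∂μ, p * (q θ * Real.log (X θ)) ≤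
        q θ * (X θ ^ p / I - 1 + Real.log I) := by
      filter_upwards [hA] with θ hθ
      rcases lt_or_eq_of_le (hq_nonneg θ) with hq' | hq'
      · have hXpos : 0 < X θ := by
          rw [hX]; exact div_pos (hθ hq') hq'
        have hYpos : 0 < X θ ^ p := Real.rpow_pos_of_pos hXpos p
        have hlogY : Real.log (X θ ^ p) = p * Real.log (X θ) := Real.log_rpow hXpos p
        have key : Real.log (X θ ^ p) ≤ X θ ^ p / I - 1 + Real.log I := by
          have h := Real.log_le_sub_one_of_pos (show 0 < X θ ^ p / I from
            div_pos hYpos hI_pos)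
          rw [Real.log_div (ne_of_gt hYpos) (ne_of_gt hI_pos)] at h
          linarith
        rw [hlogY] at key
        calc p * (q θ * Real.log (X θ)) = q θ * (p * Real.log (X θ)) := by ring
          _ ≤ q θ * (X θ ^ p / I - 1 + Real.log I) :=
            mul_le_mul_of_nonneg_left key hq'.le
      · simp [← hq']
    have hmono : ∫ θ, p * (q θ * Real.log (X θ)) ∂μ ≤
        ∫ θ, q θ * (X θ ^ p / I - 1 + Real.log I) ∂μ := by
      apply integral_mono_ae (hqlog_int.const_mul p) _ hptwise
      have heq : (fun θ => q θ * (X θ ^ p / I - 1 + Real.log I)) =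
          fun θ => (q θ * X θ ^ p) * I⁻¹ + q θ * (Real.log I - 1) := by
        funext θ; ring
      rw [heq]
      exact (hI_int.mul_const _).add (hq_int.mul_const _)
    rw [integral_const_mul] at hmono
    have hrhs : ∫ θ, q θ * (X θ ^ p / I - 1 + Real.log I) ∂μ = Real.log I := by
      have heq : (fun θ => q θ * (X θ ^ p / I - 1 + Real.log I)) =
          fun θ => (q θ * X θ ^ p) * I⁻¹ + q θ * (Real.log I - 1) := by
        funext θ; ring
      rw [heq, integral_add (hI_int.mul_const _) (hq_int.mul_const _),
        integral_mul_const, integral_mul_const, ← hI, hq_prob]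
      field_simp
      ring
    rw [hrhs] at hmono
    rw [hLα, div_mul_eq_mul_div, one_mul, le_div_iff₀ hp0, mul_comm]
    exact hmono
  exact ⟨h1, h2⟩
end
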